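/- Recovery bound for the ℓ_{1-2} regularization: Under the assumptions of the oracle theorem (b = A x̄ with x̄ s-sparse supported on S, A satisfies the ℓ_{1-2}-REC(s,s), and x* is in the level set {x : h(x) ≤ h(x̄)} of h(x) = ‖Ax−b‖_2^2 + λ(‖x‖_1 − ‖x‖_2)), it holds that ‖x* − x̄‖_2^2 ≤ (4 + max{(√s+1)/√s, 4/(√s−2)}²) · λ²(√s+1)² / φ⁴(s,s), provided s > 4. -/

import Mathlib

open Finset

noncomputable def l1 {k : ℕ} (x : Fin k → ℝ) : ℝ := ∑ i, |x i|

noncomputable def l2 {k : ℕ} (x : Fin k → ℝ) : ℝ := Real.sqrt (∑ i, (x i)^2)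

def restr {k : ℕ} (I : Finset (Fin k)) (x : Fin k → ℝ) : Fin k → ℝ :=
  fun i => if i ∈ I then x i else 0


def TLargest {k : ℕ} (x : Fin k → ℝ) (I : Finset (Fin k)) (t : ℕ) (T : Finset (Fin k)) : Prop :=
  T ⊆ Iᶜ ∧ T.card = min t Iᶜ.card ∧ ∀ i ∈ T, ∀ j ∈ Iᶜ \ T, |x j| ≤ |x i|

/-!
Write `h = xstar - xbar`. Since `xbar` vanishes off `S`, comparing the objective at `xstar` and
`xbar` gives `‖A h‖₂² ≤ λ (‖h_S‖₁ - ‖h_Sᶜ‖₁ + ‖h‖₂)`; the left side is nonnegative, so `h` lies in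
the cone of the REC condition. Let `T` be the `s` largest entries of `h` off `S`,
`u = ‖h_{S ∪ T}‖₂` and `v = ‖h_{(S ∪ T)ᶜ}‖₂`. Then REC gives `φ u ≤ ‖A h‖₂`, Cauchy–Schwarz gives
`‖h_S‖₁ ≤ √s u`, and every entry outside `S ∪ T` is at most the mean of the entries on `T`, so
`√s v ≤ ‖h_Sᶜ‖₁`. This leaves `φ² u² ≤ λ ((√s + 1) u + v)` and `(√s - 1) v ≤ (√s + 1) u`, which
bound `u` and then `v`, hence `‖h‖₂² = u² + v²`.
-/

section Norms

variable {k : ℕ}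

lemma l2_eq_norm_toLp (x : Fin k → ℝ) : l2 x = ‖WithLp.toLp 2 x‖ := by
  simp [l2, EuclideanSpace.norm_eq]

lemma l2_nonneg (x : Fin k → ℝ) : 0 ≤ l2 x := Real.sqrt_nonneg _

lemma l2_add_le (x y : Fin k → ℝ) : l2 (x + y) ≤ l2 x + l2 y := by
  simpa only [l2_eq_norm_toLp, WithLp.toLp_add] using norm_add_le _ _

lemma l1_restr (I : Finset (Fin k)) (x : Fin k → ℝ) : l1 (restr I x) = ∑ i ∈ I, |x i| := by
  simp [l1, restr, apply_ite, Finset.sum_ite_mem]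

lemma l2_restr (I : Finset (Fin k)) (x : Fin k → ℝ) :
    l2 (restr I x) = √(∑ i ∈ I, x i ^ 2) := by
  simp [l2, restr, ite_pow, Finset.sum_ite_mem]

lemma l2_restr_sq (I : Finset (Fin k)) (x : Fin k → ℝ) :
    l2 (restr I x) ^ 2 = ∑ i ∈ I, x i ^ 2 := by
  rw [l2_restr, Real.sq_sqrt (Finset.sum_nonneg fun i _ => sq_nonneg _)]

lemma restr_add_restr_compl (I : Finset (Fin k)) (x : Fin k → ℝ) :
    restr I x + restr Iᶜ x = x := by
  ext i; by_cases hi : i ∈ I <;> simp [restr, hi]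

lemma l2_le_restr_add_restr_compl (I : Finset (Fin k)) (x : Fin k → ℝ) :
    l2 x ≤ l2 (restr I x) + l2 (restr Iᶜ x) := by
  simpa only [restr_add_restr_compl] using l2_add_le (restr I x) (restr Iᶜ x)

lemma l2_sq_eq_restr_sq_add_restr_compl_sq (I : Finset (Fin k)) (x : Fin k → ℝ) :
    l2 x ^ 2 = l2 (restr I x) ^ 2 + l2 (restr Iᶜ x) ^ 2 := by
  rw [l2_restr_sq, l2_restr_sq, Finset.sum_add_sum_compl, l2,
    Real.sq_sqrt (Finset.sum_nonneg fun i _ => sq_nonneg _)]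

lemma l2_restr_mono (x : Fin k → ℝ) {I J : Finset (Fin k)} (h : I ⊆ J) :
    l2 (restr I x) ≤ l2 (restr J x) := by
  rw [l2_restr, l2_restr]
  exact Real.sqrt_le_sqrt (Finset.sum_le_sum_of_subset_of_nonneg h fun i _ _ => sq_nonneg _)

lemma l1_restr_le_sqrt_card_mul_l2_restr (I : Finset (Fin k)) (x : Fin k → ℝ) :
    l1 (restr I x) ≤ √I.card * l2 (restr I x) := by
  rw [l1_restr, l2_restr, ← Real.sqrt_mul (Nat.cast_nonneg _)]
  refine Real.le_sqrt_of_sq_le ?_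
  simpa only [sq_abs] using sq_sum_le_card_mul_sum_sq (s := I) (f := fun i => |x i|)

end Norms

section Largest

variable {ι : Type*} [DecidableEq ι]

lemma Finset.exists_subset_card_eq_min_forall_le {α : Type*} [LinearOrder α] (f : ι → α)
    (A : Finset ι) (t : ℕ) :
    ∃ T ⊆ A, T.card = min t A.card ∧ ∀ i ∈ T, ∀ j ∈ A \ T, f j ≤ f i := by
  induction t with
  | zero => exact ⟨∅, by simp⟩
  | succ t ih =>
    obtain ⟨T, hTA, hcard, hdom⟩ := ih
    by_cases hAT : A ⊆ T
    · have hTA' : T = A := hTA.antisymm hAT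
      subst hTA'
      exact ⟨T, subset_rfl, by omega, hdom⟩
    obtain ⟨j₀, hj₀, hmax⟩ := Finset.exists_max_image (A \ T) f (Finset.sdiff_nonempty.2 hAT)
    have hj₀T : j₀ ∉ T := (Finset.mem_sdiff.1 hj₀).2
    have hlt : T.card < A.card := Finset.card_lt_card (Finset.ssubset_iff_subset_ne.2
      ⟨hTA, fun h => hAT h.ge⟩)
    refine ⟨insert j₀ T, Finset.insert_subset (Finset.mem_sdiff.1 hj₀).1 hTA, ?_, ?_⟩
    · rw [Finset.card_insert_of_notMem hj₀T]; omega
    · intro i hi j hj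
      have hj' : j ∈ A \ T := Finset.sdiff_subset_sdiff subset_rfl (Finset.subset_insert _ _) hj
      rcases Finset.mem_insert.1 hi with rfl | hiT
      · exact hmax j hj'
      · exact hdom i hiT j hj'

lemma card_mul_sum_sdiff_sq_le (x : ι → ℝ) {A T : Finset ι} (hT : T ⊆ A)
    (hdom : ∀ i ∈ T, ∀ j ∈ A \ T, |x j| ≤ |x i|) :
    T.card * ∑ j ∈ A \ T, x j ^ 2 ≤ (∑ i ∈ A, |x i|) ^ 2 := by
  have hpoint : ∀ j ∈ A \ T, T.card * |x j| ≤ ∑ i ∈ T, |x i| := fun j hj => by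
    simpa using Finset.card_nsmul_le_sum T _ _ fun i hi => hdom i hi j hj
  calc T.card * ∑ j ∈ A \ T, x j ^ 2 = ∑ j ∈ A \ T, |x j| * (T.card * |x j|) := by
        rw [Finset.mul_sum]; congr! 1 with j; rw [← sq_abs]; ring
    _ ≤ ∑ j ∈ A \ T, |x j| * ∑ i ∈ T, |x i| :=
        Finset.sum_le_sum fun j hj => mul_le_mul_of_nonneg_left (hpoint j hj) (abs_nonneg _)
    _ ≤ (∑ i ∈ A, |x i|) ^ 2 := by
        rw [← Finset.sum_mul, ← Finset.sum_sdiff hT]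
        nlinarith [Finset.sum_nonneg fun i (_ : i ∈ T) => abs_nonneg (x i),
          Finset.sum_nonneg fun i (_ : i ∈ A \ T) => abs_nonneg (x i)]

end Largest

section TLargest

variable {k : ℕ}

lemma exists_TLargest (x : Fin k → ℝ) (I : Finset (Fin k)) (t : ℕ) : ∃ T, TLargest x I t T :=
  Finset.exists_subset_card_eq_min_forall_le (fun i => |x i|) Iᶜ t

lemma TLargest.sqrt_mul_l2_restr_compl_le {x : Fin k → ℝ} {I T : Finset (Fin k)} {t : ℕ}
    (hT : TLargest x I t T) : √t * l2 (restr (I ∪ T)ᶜ x) ≤ l1 (restr Iᶜ x) := by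
  obtain ⟨hTI, hcard, hdom⟩ := hT
  have hsq : t * ∑ j ∈ Iᶜ \ T, x j ^ 2 ≤ l1 (restr Iᶜ x) ^ 2 := by
    rw [l1_restr]
    rcases min_cases t Iᶜ.card with ⟨hmin, -⟩ | ⟨hmin, hlt⟩
    · rw [hmin] at hcard
      exact hcard ▸ card_mul_sum_sdiff_sq_le x hTI hdom
    · rw [Finset.eq_of_subset_of_card_le hTI (by omega), Finset.sdiff_self, Finset.sum_empty,
        mul_zero]
      positivity
  have hcompl : (I ∪ T)ᶜ = Iᶜ \ T := by ext; simp
  rw [hcompl, l2_restr, ← Real.sqrt_mul (Nat.cast_nonneg _),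
    Real.sqrt_le_left (by rw [l1_restr]; positivity)]
  exact hsq

end TLargest

section Objective

variable {k : ℕ}

lemma l1_sub_l1_add_le {S : Finset (Fin k)} {x : Fin k → ℝ} (hx : ∀ i ∉ S, x i = 0)
    (h : Fin k → ℝ) : l1 x - l1 (x + h) ≤ l1 (restr S h) - l1 (restr Sᶜ h) := by
  have hsplit : l1 x - l1 (x + h) =
      ∑ i ∈ S, (|x i| - |x i + h i|) + ∑ i ∈ Sᶜ, (|x i| - |x i + h i|) := by
    rw [Finset.sum_add_sum_compl, Finset.sum_sub_distrib]; rfl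
  have hS : ∑ i ∈ S, (|x i| - |x i + h i|) ≤ ∑ i ∈ S, |h i| :=
    Finset.sum_le_sum fun i _ => by simpa using abs_sub_abs_le_abs_sub (x i) (x i + h i)
  have hSc : ∑ i ∈ Sᶜ, (|x i| - |x i + h i|) = -∑ i ∈ Sᶜ, |h i| := by
    rw [← Finset.sum_neg_distrib]
    exact Finset.sum_congr rfl fun i hi => by simp [hx i (Finset.mem_compl.1 hi)]
  rw [hsplit, hSc, l1_restr, l1_restr]
  linarith

variable {m : ℕ}

lemma sq_l2_mulVec_sub_le_of_objective_le (A : Matrix (Fin m) (Fin k) ℝ) {S : Finset (Fin k)}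
    {xbar xstar : Fin k → ℝ} {b : Fin m → ℝ} (hb : b = A.mulVec xbar)
    (hxbar : ∀ i ∉ S, xbar i = 0) {lam : ℝ} (hlam : 0 ≤ lam)
    (hlev : l2 (A.mulVec xstar - b) ^ 2 + lam * (l1 xstar - l2 xstar) ≤
      l2 (A.mulVec xbar - b) ^ 2 + lam * (l1 xbar - l2 xbar)) :
    l2 (A.mulVec (xstar - xbar)) ^ 2 ≤ lam *
      (l1 (restr S (xstar - xbar)) - l1 (restr Sᶜ (xstar - xbar)) + l2 (xstar - xbar)) := by
  have hl1 := l1_sub_l1_add_le hxbar (xstar - xbar)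
  have hl2 := l2_add_le xbar (xstar - xbar)
  rw [add_sub_cancel] at hl1 hl2
  rw [hb, sub_self, ← Matrix.mulVec_sub] at hlev
  have hl20 : l2 (0 : Fin m → ℝ) = 0 := by simp [l2]
  rw [hl20] at hlev
  nlinarith

end Objective

section Constant

lemma one_add_div_sq_mul_div_sq_le {t : ℝ} (ht : 2 < t) :
    (1 + ((t + 1) / (t - 1)) ^ 2) * (t / (t - 1)) ^ 2 ≤ 4 + (4 / (t - 2)) ^ 2 := by
  have h1 : 0 < t - 1 := by linarith
  have h2 : 0 < t - 2 := by linarith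
  rw [div_pow, div_pow, div_pow, one_add_div (by positivity), div_mul_div_comm,
    div_le_iff₀ (by positivity), ← sub_nonneg]
  -- with `d = t - 2` this polynomial is `2 (d³ - 5d/2)² + 8d³ + 95d²/2 + 64d + 16`
  have hpoly :
      0 ≤ (4 * (t - 2) ^ 2 + 16) * (t - 1) ^ 4 - 2 * t ^ 2 * (t ^ 2 + 1) * (t - 2) ^ 2 := by
    nlinarith [mul_nonneg (sq_nonneg (t - 2)) (sq_nonneg ((t - 2) ^ 2 - 5 / 2)),
      pow_nonneg h2.le 3, sq_nonneg (t - 2), sq_nonneg t]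
  have e : (4 + 4 ^ 2 / (t - 2) ^ 2) * ((t - 1) ^ 2 * (t - 1) ^ 2) -
      ((t - 1) ^ 2 + (t + 1) ^ 2) * t ^ 2 =
      ((4 * (t - 2) ^ 2 + 16) * (t - 1) ^ 4 - 2 * t ^ 2 * (t ^ 2 + 1) * (t - 2) ^ 2) /
        (t - 2) ^ 2 := by
    field_simp; ring
  rw [e]; positivity

variable {t K u v : ℝ}

lemma mul_sub_one_le_of_sq_le (ht : 1 < t) (hK : 0 ≤ K) (hu : 0 ≤ u)
    (h1 : u ^ 2 ≤ K * ((t + 1) * u + v)) (h2 : (t - 1) * v ≤ (t + 1) * u) :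
    (t - 1) * u ≤ K * (t + 1) * t := by
  rcases hu.eq_or_lt with rfl | hu
  · simp only [mul_zero]; positivity
  have : (t - 1) * u * u ≤ K * (t + 1) * t * u := by
    nlinarith [mul_le_mul_of_nonneg_left h2 hK]
  exact le_of_mul_le_mul_right this hu

lemma sq_add_sq_le_of_sq_le (ht : 2 < t) (hK : 0 ≤ K) (hu : 0 ≤ u) (hv : 0 ≤ v)
    (h1 : u ^ 2 ≤ K * ((t + 1) * u + v)) (h2 : (t - 1) * v ≤ (t + 1) * u) :
    u ^ 2 + v ^ 2 ≤ (4 + (4 / (t - 2)) ^ 2) * (K * (t + 1)) ^ 2 := by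
  have ht1 : 0 < t - 1 := by linarith
  have hu' : u ≤ t / (t - 1) * (K * (t + 1)) := by
    rw [div_mul_eq_mul_div, le_div_iff₀ ht1]
    linarith [mul_sub_one_le_of_sq_le (by linarith) hK hu h1 h2]
  have hv' : v ≤ (t + 1) / (t - 1) * u := by
    rw [div_mul_eq_mul_div, le_div_iff₀ ht1]; linarith
  calc u ^ 2 + v ^ 2 ≤ u ^ 2 + ((t + 1) / (t - 1) * u) ^ 2 := by gcongr
    _ = (1 + ((t + 1) / (t - 1)) ^ 2) * u ^ 2 := by ring
    _ ≤ (1 + ((t + 1) / (t - 1)) ^ 2) * (t / (t - 1) * (K * (t + 1))) ^ 2 := by gcongr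
    _ = (1 + ((t + 1) / (t - 1)) ^ 2) * (t / (t - 1)) ^ 2 * (K * (t + 1)) ^ 2 := by ring
    _ ≤ (4 + (4 / (t - 2)) ^ 2) * (K * (t + 1)) ^ 2 := by
        gcongr; exact one_add_div_sq_mul_div_sq_le ht

lemma sq_add_sq_le_of_mul_sq_le {lam φ : ℝ} (ht : 2 < t) (hlam : 0 ≤ lam) (hφ : 0 < φ)
    (hu : 0 ≤ u) (hv : 0 ≤ v) (h1 : (φ * u) ^ 2 ≤ lam * ((t + 1) * u + v))
    (h2 : (t - 1) * v ≤ (t + 1) * u) :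
    u ^ 2 + v ^ 2 ≤ (4 + (4 / (t - 2)) ^ 2) * lam ^ 2 * (t + 1) ^ 2 / φ ^ 4 := by
  have h1' : u ^ 2 ≤ lam / φ ^ 2 * ((t + 1) * u + v) := by
    rw [div_mul_eq_mul_div, le_div_iff₀ (by positivity)]; linarith
  calc u ^ 2 + v ^ 2 ≤ (4 + (4 / (t - 2)) ^ 2) * (lam / φ ^ 2 * (t + 1)) ^ 2 :=
        sq_add_sq_le_of_sq_le ht (by positivity) hu hv h1' h2
    _ = (4 + (4 / (t - 2)) ^ 2) * lam ^ 2 * (t + 1) ^ 2 / φ ^ 4 := by ring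

end Constant

theorem stmt13 {m n : ℕ} (A : Matrix (Fin m) (Fin n) ℝ) (xbar xstar : Fin n → ℝ)
    (b : Fin m → ℝ) (S : Finset (Fin n)) (s : ℕ) (lam φ : ℝ) (hlam : 0 < lam)
    (hs : 4 < s)
    (hb : b = A.mulVec xbar) (hsupp : ∀ i, xbar i ≠ 0 ↔ i ∈ S) (hcardS : S.card = s)
    (hφ : 0 < φ)
    (hREC : ∀ (x : Fin n → ℝ) (I T : Finset (Fin n)), I.card ≤ s →
      l1 (restr Iᶜ x) ≤ l1 (restr I x) + l2 x → TLargest x I s T →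
      φ * l2 (restr (I ∪ T) x) ≤ l2 (A.mulVec x))
    (hlev : (l2 (A.mulVec xstar - b))^2 + lam * (l1 xstar - l2 xstar) ≤
            (l2 (A.mulVec xbar - b))^2 + lam * (l1 xbar - l2 xbar)) :
    (l2 (xstar - xbar))^2 ≤
      (4 + (max ((Real.sqrt s + 1) / Real.sqrt s) (4 / (Real.sqrt s - 2)))^2) *
        lam^2 * (Real.sqrt s + 1)^2 / φ^4 := by
  set h := xstar - xbar
  have ht : 2 < √(s : ℝ) := (Real.lt_sqrt zero_le_two).2 (by norm_num; exact_mod_cast hs)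
  have hxbar : ∀ i ∉ S, xbar i = 0 := fun i hi => not_not.1 (mt (hsupp i).1 hi)
  have hbasic : l2 (A.mulVec h) ^ 2 ≤ lam * (l1 (restr S h) - l1 (restr Sᶜ h) + l2 h) :=
    sq_l2_mulVec_sub_le_of_objective_le A hb hxbar hlam.le hlev
  have hcone : l1 (restr Sᶜ h) ≤ l1 (restr S h) + l2 h := by
    nlinarith [sq_nonneg (l2 (A.mulVec h))]
  obtain ⟨T, hT⟩ := exists_TLargest h S s
  set u := l2 (restr (S ∪ T) h)
  set v := l2 (restr (S ∪ T)ᶜ h)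
  have hφu : (φ * u) ^ 2 ≤ l2 (A.mulVec h) ^ 2 :=
    pow_le_pow_left₀ (mul_nonneg hφ.le (l2_nonneg _)) (hREC h S T hcardS.le hcone hT) 2
  have hhead : l1 (restr S h) ≤ √s * u := by
    grw [l1_restr_le_sqrt_card_mul_l2_restr, hcardS, l2_restr_mono h Finset.subset_union_left]
  have htail : √s * v ≤ l1 (restr Sᶜ h) := hT.sqrt_mul_l2_restr_compl_le
  have hsplit : l2 h ≤ u + v := l2_le_restr_add_restr_compl (S ∪ T) h
  have hv : 0 ≤ √s * v := mul_nonneg (Real.sqrt_nonneg _) (l2_nonneg _)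
  rw [l2_sq_eq_restr_sq_add_restr_compl_sq (S ∪ T)]
  refine (sq_add_sq_le_of_mul_sq_le ht hlam.le hφ (l2_nonneg _) (l2_nonneg _) ?_
    (by linarith)).trans ?_
  · calc (φ * u) ^ 2 ≤ lam * (l1 (restr S h) - l1 (restr Sᶜ h) + l2 h) := hφu.trans hbasic
      _ ≤ lam * ((√s + 1) * u + v) := mul_le_mul_of_nonneg_left (by linarith) hlam.le
  · gcongr
    exact le_max_right _ _
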